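/- arXiv:1403.7185 — 3 statements merged into one kernel-verified Lean document; each statement's English description precedes it below -/
import Mathlib

section
/- Let (𝔳 →μ₁ 𝔴, μ₂, μ₃) be a 2-term L∞-algebra, A a 𝔴-valued 1-form and B a 𝔳-valued 2-form on an open set U, with fake curvature F := dA + ½μ₂(A,A) − μ₁(B) and 3-form curvature H := dB + μ₂(A,B) − (1/3!)μ₃(A,A,A). Under the infinitesimal gauge transformation δA = dω + μ₂(A,ω) − μ₁(Λ), δB = −dΛ − μ₂(A,Λ) + μ₂(B,ω) + ½μ₃(ω,A,A) with ω a 𝔴-valued function and Λ a 𝔳-valued 1-form, if F = 0 then the induced variation of H is δH = μ₂(H,ω). -/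
/-- Local semistrict higher gauge theory: if the fake curvature
`F := dA + ½μ₂(A,A) − μ₁(B)` vanishes, then under the infinitesimal gauge
transformation `δA = dω + μ₂(A,ω) − μ₁(Λ)`,
`δB = −dΛ − μ₂(A,Λ) + μ₂(B,ω) + ½μ₃(ω,A,A)`, the induced variation of the
3-form curvature `H := dB + μ₂(A,B) − (1/3!)μ₃(A,A,A)` is `δH = μ₂(H,ω)`.

The spaces `Wp`/`Vp` model the `𝔴`-valued resp. `𝔳`-valued `p`-forms on an
open set `U`, for a 2-term L∞-algebra `𝔳 →μ₁ 𝔴`; the maps `d…`, `m1…`,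
`m2…`, `n2…`, `m3…` are the de Rham differential and the L∞-products
`μ₁, μ₂, μ₃` extended to differential-form-valued elements with Koszul signs.
The hypotheses are the corresponding graded Leibniz rules, graded
antisymmetry, and the form-extended higher homotopy Jacobi identities at the
relevant degrees. -/
theorem semistrict_deltaH_eq_mu2_H_omega
    (W0 W1 W2 V1 V2 V3 : Type*)
    [AddCommGroup W0] [Module ℝ W0] [AddCommGroup W1] [Module ℝ W1]
    [AddCommGroup W2] [Module ℝ W2] [AddCommGroup V1] [Module ℝ V1]
    [AddCommGroup V2] [Module ℝ V2] [AddCommGroup V3] [Module ℝ V3]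
    (dW0 : W0 →ₗ[ℝ] W1) (dW1 : W1 →ₗ[ℝ] W2)
    (dV1 : V1 →ₗ[ℝ] V2) (dV2 : V2 →ₗ[ℝ] V3)
    (m1₁ : V1 →ₗ[ℝ] W1) (m1₂ : V2 →ₗ[ℝ] W2)
    (m2_10 : W1 →ₗ[ℝ] W0 →ₗ[ℝ] W1)      -- μ₂ : Ω¹𝔴 × Ω⁰𝔴 → Ω¹𝔴
    (m2_11 : W1 →ₗ[ℝ] W1 →ₗ[ℝ] W2)      -- μ₂ : Ω¹𝔴 × Ω¹𝔴 → Ω²𝔴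
    (n2_11 : W1 →ₗ[ℝ] V1 →ₗ[ℝ] V2)      -- μ₂ : Ω¹𝔴 × Ω¹𝔳 → Ω²𝔳
    (n2_20 : V2 →ₗ[ℝ] W0 →ₗ[ℝ] V2)      -- μ₂ : Ω²𝔳 × Ω⁰𝔴 → Ω²𝔳
    (n2_12 : W1 →ₗ[ℝ] V2 →ₗ[ℝ] V3)      -- μ₂ : Ω¹𝔴 × Ω²𝔳 → Ω³𝔳
    (n2_21 : W2 →ₗ[ℝ] V1 →ₗ[ℝ] V3)      -- μ₂ : Ω²𝔴 × Ω¹𝔳 → Ω³𝔳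
    (n2_v2w1 : V2 →ₗ[ℝ] W1 →ₗ[ℝ] V3)    -- μ₂ : Ω²𝔳 × Ω¹𝔴 → Ω³𝔳
    (n2_30 : V3 →ₗ[ℝ] W0 →ₗ[ℝ] V3)      -- μ₂ : Ω³𝔳 × Ω⁰𝔴 → Ω³𝔳
    (m3_011 : W0 →ₗ[ℝ] W1 →ₗ[ℝ] W1 →ₗ[ℝ] V2)
    (m3_021 : W0 →ₗ[ℝ] W2 →ₗ[ℝ] W1 →ₗ[ℝ] V3)
    (m3_111 : W1 →ₗ[ℝ] W1 →ₗ[ℝ] W1 →ₗ[ℝ] V3)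
    -- d² = 0, graded antisymmetry and graded Leibniz rules
    (hdd : ∀ l : V1, dV2 (dV1 l) = 0)
    (hanti : ∀ (b : V2) (a : W1), n2_v2w1 b a = - n2_12 a b)
    (hleibA : ∀ (a : W1) (l : V1),
      dV2 (n2_11 a l) = n2_21 (dW1 a) l - n2_12 a (dV1 l))
    (hleibB : ∀ (b : V2) (w : W0),
      dV2 (n2_20 b w) = n2_30 (dV2 b) w + n2_v2w1 b (dW0 w))
    (hleibC : ∀ (w : W0) (a : W1),
      dV2 (m3_011 w a a) = m3_111 (dW0 w) a a + 2 • m3_021 w (dW1 a) a)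
    -- form-extended homotopy Jacobi identities
    (hJ2 : ∀ (b : V2) (l : V1), n2_21 (m1₂ b) l = - n2_12 (m1₁ l) b)
    (hJ4 : ∀ (l : V1) (a : W1),
      m3_111 (m1₁ l) a a = 2 • n2_12 a (n2_11 a l) - n2_21 (m2_11 a a) l)
    (hJ4' : ∀ (w : W0) (b : V2) (a : W1),
      m3_021 w (m1₂ b) a
        = n2_30 (n2_12 a b) w - n2_12 (m2_10 a w) b - n2_12 a (n2_20 b w))
    (hJ5 : ∀ (w : W0) (a : W1),
      3 • m3_021 w (m2_11 a a) a + 3 • m3_111 (m2_10 a w) a a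
          - 3 • n2_12 a (m3_011 w a a)
        = n2_30 (m3_111 a a a) w)
    -- the gauge data: potentials `A`, `B`, gauge parameters `ω`, `Λ`,
    -- and vanishing fake curvature
    (A : W1) (B : V2) (ω : W0) (Λ : V1)
    (hF : dW1 A + (2 : ℝ)⁻¹ • m2_11 A A - m1₂ B = 0) :
    let δA := dW0 ω + m2_10 A ω - m1₁ Λ
    let δB := - dV1 Λ - n2_11 A Λ + n2_20 B ω + (2 : ℝ)⁻¹ • m3_011 ω A A
    let H := dV2 B + n2_12 A B - (6 : ℝ)⁻¹ • m3_111 A A A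
    dV2 δB + n2_12 δA B + n2_12 A δB - (2 : ℝ)⁻¹ • m3_111 δA A A
      = n2_30 H ω := by
  intro δA δB H
  have hA : dW1 A = m1₂ B - (2 : ℝ)⁻¹ • m2_11 A A := by
    linear_combination (norm := module) hF
  simp only [δA, δB, H, map_add, map_sub, map_neg, map_smul,
    LinearMap.add_apply, LinearMap.sub_apply, LinearMap.neg_apply,
    LinearMap.smul_apply, hA, hdd, hanti, hleibA, hleibB, hleibC, hJ2, hJ4,
    hJ4']
  linear_combination (norm := module) (-(6:ℝ)⁻¹ : ℝ) • hJ5 ω A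
end

section
/- In local semistrict higher gauge theory, two gauge transformations parameterized by (ω,Λ) and (ω + μ₁(σ), Λ + dσ + μ₂(A,σ)) for a 𝔳-valued function σ induce the same variations δA and δB of the gauge potentials. -/
/-- In local semistrict higher gauge theory, the two gauge transformations
parameterized by `(ω, Λ)` and by `(ω + μ₁(σ), Λ + dσ + μ₂(A,σ))` for a
`𝔳`-valued function `σ` induce the same variations
`δA = dω + μ₂(A,ω) − μ₁(Λ)` and
`δB = −dΛ − μ₂(A,Λ) + μ₂(B,ω) + ½μ₃(ω,A,A)` of the gauge potentials.

The spaces `Wp`/`Vp` model `𝔴`-valued resp. `𝔳`-valued `p`-forms for a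
2-term L∞-algebra `𝔳 →μ₁ 𝔴`, the hypotheses are the graded Leibniz rules
and form-extended homotopy Jacobi identities at the relevant degrees, and the
fake curvature `F := dA + ½μ₂(A,A) − μ₁(B)` vanishes. -/
theorem gauge_of_gauge_transformations
    (W0 W1 W2 V0 V1 V2 : Type*)
    [AddCommGroup W0] [Module ℝ W0] [AddCommGroup W1] [Module ℝ W1]
    [AddCommGroup W2] [Module ℝ W2] [AddCommGroup V0] [Module ℝ V0]
    [AddCommGroup V1] [Module ℝ V1] [AddCommGroup V2] [Module ℝ V2]
    (dW0 : W0 →ₗ[ℝ] W1) (dW1 : W1 →ₗ[ℝ] W2)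
    (dV0 : V0 →ₗ[ℝ] V1) (dV1 : V1 →ₗ[ℝ] V2)
    (m1₀ : V0 →ₗ[ℝ] W0) (m1₁ : V1 →ₗ[ℝ] W1) (m1₂ : V2 →ₗ[ℝ] W2)
    (m2_10 : W1 →ₗ[ℝ] W0 →ₗ[ℝ] W1)       -- μ₂ : Ω¹𝔴 × Ω⁰𝔴 → Ω¹𝔴
    (m2_11 : W1 →ₗ[ℝ] W1 →ₗ[ℝ] W2)       -- μ₂ : Ω¹𝔴 × Ω¹𝔴 → Ω²𝔴
    (n2_10 : W1 →ₗ[ℝ] V0 →ₗ[ℝ] V1)       -- μ₂ : Ω¹𝔴 × Ω⁰𝔳 → Ω¹𝔳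
    (n2_11 : W1 →ₗ[ℝ] V1 →ₗ[ℝ] V2)       -- μ₂ : Ω¹𝔴 × Ω¹𝔳 → Ω²𝔳
    (n2_20 : V2 →ₗ[ℝ] W0 →ₗ[ℝ] V2)       -- μ₂ : Ω²𝔳 × Ω⁰𝔴 → Ω²𝔳
    (n2_w2v0 : W2 →ₗ[ℝ] V0 →ₗ[ℝ] V2)     -- μ₂ : Ω²𝔴 × Ω⁰𝔳 → Ω²𝔳
    (m3_011 : W0 →ₗ[ℝ] W1 →ₗ[ℝ] W1 →ₗ[ℝ] V2)
    -- d² = 0, μ₁ commutes with d, Leibniz rule and form-extended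
    -- homotopy Jacobi identities
    (hdd : ∀ s : V0, dV1 (dV0 s) = 0)
    (hchain : ∀ s : V0, m1₁ (dV0 s) = dW0 (m1₀ s))
    (hJ1a : ∀ (a : W1) (s : V0), m1₁ (n2_10 a s) = m2_10 a (m1₀ s))
    (hleib : ∀ (a : W1) (s : V0),
      dV1 (n2_10 a s) = n2_w2v0 (dW1 a) s - n2_11 a (dV0 s))
    (hJ1b : ∀ (b : V2) (s : V0), n2_w2v0 (m1₂ b) s = n2_20 b (m1₀ s))
    (hJ4 : ∀ (s : V0) (a : W1),
      m3_011 (m1₀ s) a a = 2 • n2_11 a (n2_10 a s) - n2_w2v0 (m2_11 a a) s)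
    -- the gauge data, with vanishing fake curvature
    (A : W1) (B : V2) (ω : W0) (Λ : V1) (σ : V0)
    (hF : dW1 A + (2 : ℝ)⁻¹ • m2_11 A A - m1₂ B = 0) :
    let ω' := ω + m1₀ σ
    let Λ' := Λ + dV0 σ + n2_10 A σ
    (dW0 ω' + m2_10 A ω' - m1₁ Λ' = dW0 ω + m2_10 A ω - m1₁ Λ) ∧
    (- dV1 Λ' - n2_11 A Λ' + n2_20 B ω' + (2 : ℝ)⁻¹ • m3_011 ω' A A
      = - dV1 Λ - n2_11 A Λ + n2_20 B ω + (2 : ℝ)⁻¹ • m3_011 ω A A) := by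
  intro ω' Λ'
  have hB : m1₂ B = dW1 A + (2 : ℝ)⁻¹ • m2_11 A A := by
    have := hF; linear_combination (norm := module) -this
  constructor
  · simp only [ω', Λ', map_add, hchain σ, hJ1a A σ]
    abel
  · simp only [ω', Λ', map_add, map_smul, LinearMap.add_apply, LinearMap.smul_apply,
      hdd σ, hleib A σ, ← hJ1b B σ, hB, hJ4 σ A]
    module
end

section
/- Let (H →∂ G, ▷) be a crossed module of groups and let ({g_ab},{h_abc}) satisfy the strict 2-bundle cocycle conditions ∂(h_abc) g_ab g_bc = g_ac and h_acd h_abc = h_abd (g_ab ▷ h_bcd). Then coboundary equivalence — the existence of ({g_a},{h_ab}) with g_a g̃_ab = ∂(h_ab) g_ab g_b and h_ac h_abc = (g_a ▷ h̃_abc) h_ab (g_ab ▷ h_bc) — relating ({g_ab},{h_abc}) to ({g̃_ab},{h̃_abc}) implies that ({g̃_ab},{h̃_abc}) also satisfies the cocycle conditions. -/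
/-- A crossed module of groups: a homomorphism `∂ : H → G` together with an
action of `G` on `H` by automorphisms satisfying equivariance and the Peiffer
identity. -/
structure CrossedModule (G H : Type*) [Group G] [Group H] where
  delta : H →* G
  act : G →* MulAut H
  equivariance : ∀ (g : G) (h : H), delta (act g h) = g * delta h * g⁻¹
  peiffer : ∀ h₁ h₂ : H, act (delta h₁) h₂ = h₁ * h₂ * h₁⁻¹

/-- If `({g_ab},{h_abc})` satisfies the strict principal 2-bundle cocycle
conditions `∂(h_abc) g_ab g_bc = g_ac` and
`h_acd h_abc = h_abd (g_ab ▷ h_bcd)`, and `({g̃_ab},{h̃_abc})` is related to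
it by a coboundary `({g_a},{h_ab})` via `g_a g̃_ab = ∂(h_ab) g_ab g_b` and
`h_ac h_abc = (g_a ▷ h̃_abc) h_ab (g_ab ▷ h_bc)`, then `({g̃_ab},{h̃_abc})`
also satisfies the cocycle conditions. -/
theorem coboundary_preserves_cocycle_conditions
    {G H : Type*} [Group G] [Group H] (C : CrossedModule G H)
    {ι : Type*} (g gt : ι → ι → G) (h ht : ι → ι → ι → H)
    (hcoc1 : ∀ a b c : ι, C.delta (h a b c) * g a b * g b c = g a c)
    (hcoc2 : ∀ a b c d : ι,
      h a c d * h a b c = h a b d * C.act (g a b) (h b c d))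
    (ga : ι → G) (hab : ι → ι → H)
    (hcb1 : ∀ a b : ι, ga a * gt a b = C.delta (hab a b) * g a b * ga b)
    (hcb2 : ∀ a b c : ι,
      hab a c * h a b c
        = C.act (ga a) (ht a b c) * hab a b * C.act (g a b) (hab b c)) :
    (∀ a b c : ι, C.delta (ht a b c) * gt a b * gt b c = gt a c) ∧
    (∀ a b c d : ι,
      ht a c d * ht a b c = ht a b d * C.act (gt a b) (ht b c d)) := by
  -- explicit formula for gt
  have gt_eq : ∀ a b : ι, gt a b = (ga a)⁻¹ * (C.delta (hab a b) * g a b * ga b) := by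
    intro a b
    rw [← hcb1 a b]; group
  -- explicit formula for act (ga a) (ht a b c)
  have ht_eq : ∀ a b c : ι, C.act (ga a) (ht a b c)
      = hab a c * h a b c * (C.act (g a b) (hab b c))⁻¹ * (hab a b)⁻¹ := by
    intro a b c
    have e := (hcb2 a b c).symm
    calc C.act (ga a) (ht a b c)
        = (C.act (ga a) (ht a b c) * hab a b * C.act (g a b) (hab b c))
            * (C.act (g a b) (hab b c))⁻¹ * (hab a b)⁻¹ := by group
      _ = hab a c * h a b c * (C.act (g a b) (hab b c))⁻¹ * (hab a b)⁻¹ := by rw [e]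
  constructor
  · intro a b c
    -- compute delta (ht a b c)
    have e3 : C.delta (ht a b c)
        = (ga a)⁻¹ * C.delta (C.act (ga a) (ht a b c)) * ga a := by
      rw [C.equivariance]; group
    rw [e3, ht_eq, gt_eq a b, gt_eq b c, gt_eq a c]
    simp only [map_mul, map_inv, C.equivariance]
    rw [← hcoc1 a b c]
    group
  · intro a b c d
    apply (C.act (ga a)).injective
    simp only [map_mul]
    have ACT : C.act (ga a) (C.act (gt a b) (ht b c d))
        = hab a b * C.act (g a b) (C.act (ga b) (ht b c d)) * (hab a b)⁻¹ := by
      have : C.act (ga a) (C.act (gt a b) (ht b c d))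
          = C.act (ga a * gt a b) (ht b c d) := by
        rw [map_mul]; rfl
      rw [this, hcb1 a b, map_mul, map_mul, MulAut.mul_apply, MulAut.mul_apply,
        C.peiffer]
    have comm : ∀ x : H, C.act (g a c) x
        = h a b c * C.act (g a b) (C.act (g b c) x) * (h a b c)⁻¹ := by
      intro x
      rw [← hcoc1 a b c, map_mul, map_mul, MulAut.mul_apply, MulAut.mul_apply,
        C.peiffer]
    rw [ACT, ht_eq a c d, ht_eq a b c, ht_eq a b d, ht_eq b c d]
    simp only [map_mul, map_inv]
    rw [comm (hab c d)]
    -- now reduce using the original cocycle condition hcoc2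
    have key := hcoc2 a b c d
    calc hab a d * h a c d *
          (h a b c * C.act (g a b) (C.act (g b c) (hab c d)) * (h a b c)⁻¹)⁻¹ *
          (hab a c)⁻¹ *
          (hab a c * h a b c * (C.act (g a b) (hab b c))⁻¹ * (hab a b)⁻¹)
        = hab a d * (h a c d * h a b c) *
            (C.act (g a b) (C.act (g b c) (hab c d)))⁻¹ *
            (C.act (g a b) (hab b c))⁻¹ * (hab a b)⁻¹ := by group
      _ = hab a d * (h a b d * C.act (g a b) (h b c d)) *
            (C.act (g a b) (C.act (g b c) (hab c d)))⁻¹ *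
            (C.act (g a b) (hab b c))⁻¹ * (hab a b)⁻¹ := by rw [key]
      _ = hab a d * h a b d * (C.act (g a b) (hab b d))⁻¹ * (hab a b)⁻¹ *
            (hab a b *
              (C.act (g a b) (hab b d) * C.act (g a b) (h b c d) *
                (C.act (g a b) (C.act (g b c) (hab c d)))⁻¹ *
                (C.act (g a b) (hab b c))⁻¹) *
              (hab a b)⁻¹) := by group
end
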